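/- Let g > 0, Δx > 0, n ≥ 1, and let y₀ = 0 > y₁, y₂, …, yₙ be real numbers with yᵢ < 0 for 1 ≤ i ≤ n. Let f : [0, n·Δx] → ℝ be the continuous piecewise-linear function with f(i·Δx) = yᵢ for i = 0, …, n and f linear on each interval [i·Δx, (i+1)·Δx]. Then the (improper at 0) integral ∫₀^{n·Δx} √(1 + f'(x)²)/√(−2·g·f(x)) dx converges and equals Σᵢ₌₀^{n−1} t(uᵢ, yᵢ), where uᵢ = yᵢ₊₁ − yᵢ and t(u, y) = Δx/√(−2·g·y) if u = 0 and t(u, y) = √(2/g)·(√(Δx² + u²)/u)·(√(−y) − √(−(u + y))) if u ≠ 0. -/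

import Mathlib

/-!
On a segment of slope `s = u / Δx` the integrand is `√(1 + s²) / √(-2 g ℓ x)` with `ℓ` affine, and
for `u ≠ 0` it is the derivative of `-√(2/g) · (√(Δx² + u²) / u) · √(-ℓ x)`. Since the integrand is
nonnegative, the fundamental theorem of calculus for nonnegative derivatives yields integrability
even where `ℓ` vanishes at the left endpoint (the improper integral at `0`), together with the
value `segTime`. Summing over the adjacent segments gives the theorem.
-/

open MeasureTheory

/-- Travel time of a single linear segment of horizontal width `Δx` starting at height `y`
with vertical displacement `u`, under gravity `g`. -/
noncomputable def segTime (g Δx u y : ℝ) : ℝ :=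
  if u = 0 then Δx / Real.sqrt (-2 * g * y)
  else Real.sqrt (2 / g) * (Real.sqrt (Δx ^ 2 + u ^ 2) / u) *
    (Real.sqrt (-y) - Real.sqrt (-(u + y)))

open Set intervalIntegral

theorem intervalIntegrable_and_integral_eq_sub_of_deriv_nonneg {F F' : ℝ → ℝ} {a b : ℝ}
    (hab : a ≤ b) (hcont : ContinuousOn F (Icc a b))
    (hderiv : ∀ x ∈ Ioo a b, HasDerivAt F (F' x) x) (hnonneg : ∀ x ∈ Ioo a b, 0 ≤ F' x) :
    IntervalIntegrable F' volume a b ∧ ∫ x in a..b, F' x = F b - F a := by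
  have hint : IntervalIntegrable F' volume a b := by
    rw [intervalIntegrable_iff_integrableOn_Ioc_of_le hab]
    exact integrableOn_deriv_of_nonneg hcont hderiv hnonneg
  exact ⟨hint, integral_eq_sub_of_hasDerivAt_of_le hab hcont hderiv hint⟩

theorem intervalIntegrable_and_integral_eq_sum_of_adjacent {φ : ℝ → ℝ} {a s : ℕ → ℝ} {n : ℕ}
    (h : ∀ k < n, IntervalIntegrable φ volume (a k) (a (k + 1)) ∧
      ∫ x in a k..a (k + 1), φ x = s k) :
    IntervalIntegrable φ volume (a 0) (a n) ∧ ∫ x in a 0..a n, φ x = ∑ k ∈ Finset.range n, s k := by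
  refine ⟨IntervalIntegrable.trans_iterate fun k hk => (h k hk).1, ?_⟩
  rw [← sum_integral_adjacent_intervals fun k hk => (h k hk).1]
  exact Finset.sum_congr rfl fun k hk => (h k (Finset.mem_range.1 hk)).2

theorem deriv_eq_of_eq_affine_on_Icc {f : ℝ → ℝ} {p q c s a x : ℝ}
    (hf : ∀ z ∈ Icc p q, f z = c + s * (z - a)) (hx : x ∈ Ioo p q) : deriv f x = s := by
  have hloc : (fun z => c + s * (z - a)) =ᶠ[nhds x] f :=
    Filter.eventuallyEq_of_mem (Icc_mem_nhds hx.1 hx.2) fun z hz => (hf z hz).symm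
  have haff : HasDerivAt (fun z => c + s * (z - a)) s x := by
    simpa using (((hasDerivAt_id x).sub_const a).const_mul s).const_add c
  exact (haff.congr_of_eventuallyEq hloc.symm).deriv

theorem chord_neg_of_mem_Ioo {Y u Δx a x : ℝ} (hΔx : 0 < Δx) (hY : Y ≤ 0) (hYu : u + Y < 0)
    (hx : x ∈ Ioo a (a + Δx)) : Y + u / Δx * (x - a) < 0 := by
  obtain ⟨t, ht0, ht1, rfl⟩ : ∃ t, 0 < t ∧ t < 1 ∧ x = a + t * Δx :=
    ⟨(x - a) / Δx, by have := hx.1; positivity, by rw [div_lt_one hΔx]; linarith [hx.2],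
      by field_simp; ring⟩
  have hconvex : Y + u / Δx * (a + t * Δx - a) = (1 - t) * Y + t * (u + Y) := by field_simp; ring
  rw [hconvex]
  nlinarith

theorem hasDerivAt_descent_antideriv {g Δx u Y a x : ℝ} (hg : 0 < g) (hΔx : 0 < Δx) (hu : u ≠ 0)
    (hx : Y + u / Δx * (x - a) < 0) :
    HasDerivAt (fun z => -(√(2 / g) * (√(Δx ^ 2 + u ^ 2) / u)) * √(-(Y + u / Δx * (z - a))))
      (√(1 + (u / Δx) ^ 2) / √(-2 * g * (Y + u / Δx * (x - a)))) x := by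
  have hlin : HasDerivAt (fun z => -(Y + u / Δx * (z - a))) (-(u / Δx * 1)) x :=
    ((((hasDerivAt_id x).sub_const a).const_mul (u / Δx)).const_add Y).neg
  refine ((hlin.sqrt (neg_ne_zero.2 hx.ne)).const_mul _).congr_deriv ?_
  generalize Y + u / Δx * (x - a) = ℓ at hx ⊢
  have hlen : √(Δx ^ 2 + u ^ 2) = Δx * √(1 + (u / Δx) ^ 2) := by
    rw [show Δx ^ 2 + u ^ 2 = Δx ^ 2 * (1 + (u / Δx) ^ 2) by field_simp,
      Real.sqrt_mul (sq_nonneg _), Real.sqrt_sq hΔx.le]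
  have hsplit : √(-2 * g * ℓ) = g * √(2 / g) * √(-ℓ) := by
    rw [show -2 * g * ℓ = g ^ 2 * (2 / g) * -ℓ by field_simp,
      Real.sqrt_mul (by positivity), Real.sqrt_mul (sq_nonneg _), Real.sqrt_sq hg.le]
  have hsq : √(2 / g) ^ 2 = 2 / g := Real.sq_sqrt (by positivity)
  have hℓ : 0 < √(-ℓ) := Real.sqrt_pos.2 (by linarith)
  have hc : 0 < √(2 / g) := Real.sqrt_pos.2 (by positivity)
  rw [hlen, hsplit]
  field_simp
  rw [hsq]
  field_simp

theorem intervalIntegrable_and_integral_eq_segTime {g Δx u Y : ℝ} (hg : 0 < g) (hΔx : 0 < Δx)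
    (hY : Y ≤ 0) (hYu : u + Y < 0) (a : ℝ) :
    IntervalIntegrable (fun x => √(1 + (u / Δx) ^ 2) / √(-2 * g * (Y + u / Δx * (x - a))))
      volume a (a + Δx) ∧
    ∫ x in a..a + Δx, √(1 + (u / Δx) ^ 2) / √(-2 * g * (Y + u / Δx * (x - a))) =
      segTime g Δx u Y := by
  rcases eq_or_ne u 0 with rfl | hu
  · simp [segTime, div_eq_mul_inv, mul_comm]
  · obtain ⟨hint, hval⟩ := intervalIntegrable_and_integral_eq_sub_of_deriv_nonneg
      (le_add_of_nonneg_right hΔx.le : a ≤ a + Δx) (Continuous.continuousOn (by fun_prop))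
      (fun x hx => hasDerivAt_descent_antideriv hg hΔx hu (chord_neg_of_mem_Ioo hΔx hY hYu hx))
      (fun x _ => by positivity)
    refine ⟨hint, hval.trans ?_⟩
    rw [segTime, if_neg hu, add_sub_cancel_left, div_mul_cancel₀ u hΔx.ne', sub_self, mul_zero,
      add_zero, add_comm Y u]
    ring

theorem intervalIntegrable_and_integral_eq_segTime_of_eq_affine {f : ℝ → ℝ} {g Δx u Y a : ℝ}
    (hg : 0 < g) (hΔx : 0 < Δx) (hY : Y ≤ 0) (hYu : u + Y < 0)
    (hf : ∀ x ∈ Icc a (a + Δx), f x = Y + u / Δx * (x - a)) :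
    IntervalIntegrable (fun x => √(1 + deriv f x ^ 2) / √(-2 * g * f x)) volume a (a + Δx) ∧
    ∫ x in a..a + Δx, √(1 + deriv f x ^ 2) / √(-2 * g * f x) = segTime g Δx u Y := by
  have hab : a ≤ a + Δx := le_add_of_nonneg_right hΔx.le
  have hEq : EqOn (fun x => √(1 + (u / Δx) ^ 2) / √(-2 * g * (Y + u / Δx * (x - a))))
      (fun x => √(1 + deriv f x ^ 2) / √(-2 * g * f x)) (Ioo a (a + Δx)) := fun x hx => by
    simp only [deriv_eq_of_eq_affine_on_Icc hf hx, hf x (Ioo_subset_Icc_self hx)]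
  obtain ⟨hint, hval⟩ := intervalIntegrable_and_integral_eq_segTime hg hΔx hY hYu a
  exact ⟨hint.congr_uIoo (uIoo_of_le hab ▸ hEq),
    (integral_congr_Ioo_of_le hab hEq).symm.trans hval⟩

theorem piecewise_linear_descent_time_general (g Δx : ℝ) (n : ℕ) (hg : 0 < g) (hΔx : 0 < Δx)
    (y : ℕ → ℝ) (hy0 : y 0 = 0)
    (hyneg : ∀ i, 1 ≤ i → i ≤ n → y i < 0)
    (f : ℝ → ℝ)
    (hf : ∀ i < n, ∀ x ∈ Set.Icc ((i : ℝ) * Δx) (((i : ℝ) + 1) * Δx),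
      f x = y i + ((y (i + 1) - y i) / Δx) * (x - (i : ℝ) * Δx)) :
    IntervalIntegrable
      (fun x => Real.sqrt (1 + (deriv f x) ^ 2) / Real.sqrt (-2 * g * f x))
      volume 0 ((n : ℝ) * Δx) ∧
    (∫ x in (0 : ℝ)..((n : ℝ) * Δx),
        Real.sqrt (1 + (deriv f x) ^ 2) / Real.sqrt (-2 * g * f x)) =
      ∑ i ∈ Finset.range n, segTime g Δx (y (i + 1) - y i) (y i) := by
  have hsegment : ∀ i < n,
      IntervalIntegrable (fun x => √(1 + deriv f x ^ 2) / √(-2 * g * f x)) volume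
        ((i : ℕ) * Δx) (((i + 1 : ℕ) : ℝ) * Δx) ∧
      ∫ x in (i : ℕ) * Δx..((i + 1 : ℕ) : ℝ) * Δx, √(1 + deriv f x ^ 2) / √(-2 * g * f x) =
        segTime g Δx (y (i + 1) - y i) (y i) := by
    intro i hi
    have hY : y i ≤ 0 := by
      rcases i with _ | i
      · exact hy0.le
      · exact (hyneg _ (by omega) hi.le).le
    have hYu : y (i + 1) - y i + y i < 0 := by simpa using hyneg (i + 1) (by omega) hi
    rw [Nat.cast_succ, add_one_mul]
    exact intervalIntegrable_and_integral_eq_segTime_of_eq_affine hg hΔx hY hYu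
      (add_one_mul (i : ℝ) Δx ▸ hf i hi)
  simpa using intervalIntegrable_and_integral_eq_sum_of_adjacent
    (a := fun k : ℕ => (k : ℝ) * Δx) hsegment

/-- Total descent time along a continuous piecewise-linear path through the grid points
`(i·Δx, yᵢ)` with `y₀ = 0` and `yᵢ < 0` for `1 ≤ i ≤ n`: the (improper at `0`) integral
`∫₀^{n·Δx} √(1 + f' x ^ 2)/√(-2·g·f x) dx` converges and equals the sum of the
segment times `t(uᵢ, yᵢ)` with `uᵢ = yᵢ₊₁ - yᵢ`. -/
theorem piecewise_linear_descent_time (g Δx : ℝ) (n : ℕ) (hg : 0 < g) (hΔx : 0 < Δx)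
    (hn : 1 ≤ n) (y : ℕ → ℝ) (hy0 : y 0 = 0)
    (hyneg : ∀ i, 1 ≤ i → i ≤ n → y i < 0)
    (f : ℝ → ℝ)
    (hf : ∀ i < n, ∀ x ∈ Set.Icc ((i : ℝ) * Δx) (((i : ℝ) + 1) * Δx),
      f x = y i + ((y (i + 1) - y i) / Δx) * (x - (i : ℝ) * Δx)) :
    IntervalIntegrable
      (fun x => Real.sqrt (1 + (deriv f x) ^ 2) / Real.sqrt (-2 * g * f x))
      volume 0 ((n : ℝ) * Δx) ∧
    (∫ x in (0 : ℝ)..((n : ℝ) * Δx),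
        Real.sqrt (1 + (deriv f x) ^ 2) / Real.sqrt (-2 * g * f x)) =
      ∑ i ∈ Finset.range n, segTime g Δx (y (i + 1) - y i) (y i) :=
  piecewise_linear_descent_time_general g Δx n hg hΔx y hy0 hyneg f hf
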